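/- Fix integers M ≥ N ≥ 1, parameters t, α₀,…,α_M, γ₀,…,γ_M ∈ ℂ with t ≠ 0, and integers 1 ≤ x̄₁ < ⋯ < x̄_N = M. For nonzero z₁,…,z_N ∈ ℂ with t²z_j² ≠ 1 for all j, t²z_jz_k ≠ 1 and z_j ≠ z_k for all j < k, define F̄^I_{M,N}(z₁,…,z_N; γ₁,…,γ_M; x̄₁,…,x̄_N) = [ t^{N(M-N)+N(N+1)/2} ∏_{j=1}^{N}(1+tz_j²) ∏_{1≤j<k≤N}(1+tz_jz_k)(1+tz_j^{-1}z_k) ] / [ (−1)^N ∏_{j=1}^{N}(1−t²z_j²) ∏_{1≤j<k≤N}(1−t²z_jz_k)(1−z_j^{-1}z_k) ] × Σ_{σ ∈ S_N} Σ_{τ ∈ {±1}^N} sgn(σ) (−1)^{#{j : τ_j = −1}} ∏_{j=1}^{N} [ ∏_{k=0}^{x̄_j-1}(−α_k + (1-α_kγ_k)(t z_{σ(j)})^{τ_{σ(j)}}) ] [ ∏_{k=x̄_j+1}^{M}(1 + γ_k (t z_{σ(j)})^{τ_{σ(j)}}) ] [ ∏_{k=1}^{M}(1 + γ_k (t z_{σ(j)})^{-τ_{σ(j)}})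 ]. Then, with γ_M specialized to γ_M = −(t z_N)^{-1}, F̄^I_{M,N}(z₁,…,z_N; γ₁,…,γ_{M-1}, −(t z_N)^{-1}; x̄₁,…,x̄_N) = ∏_{j=1}^{N}(1 + (t z_N z_j)^{-1}) · ∏_{j=1}^{N-1}(1 + z_j (t z_N)^{-1}) · ∏_{j=0}^{M-1}(t(1-α_jγ_j) z_N − α_j) · ∏_{j=1}^{M-1}(t + γ_j z_N^{-1}) · F̄^I_{M-1,N-1}(z₁,…,z_{N-1}; γ₁,…,γ_{M-1}; x̄₁,…,x̄_{N-1}), where F̄^I_{M-1,0} is interpreted as 1. -/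

import Mathlib

/-!
Summing over the signs `τ` first turns the double sum into the determinant of the matrix whose
`(j, i)` entry is the difference of the `τ = +1` and `τ = -1` factors of hole `x̄_j` at `z_i`
(a symplectic Schur determinant). The `τ = -1` factor always contains `1 + γ_M t z_i`, and the
`τ = +1` factor does too unless `x̄_j = M`; so at `γ_M = -(t z_N)⁻¹` the last column vanishes
except for its diagonal entry. Expanding along it leaves the `(M - 1, N - 1)` determinant with
column `i` scaled by `(1 + γ_M t z_i)(1 + γ_M (t z_i)⁻¹)`, and these column factors combine with
the terms of the prefactor involving `z_N` into the stated products.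
-/

open Finset

/-- The reindexed explicit sum formula `F̄^I_{M,N}` (equation (121) in the Appendix of the
paper): the product of the type I dual prefactor and the generalized symplectic Schur
function `sp_{λ̄}(tz₁,…,tz_N | −α | −γ)` with `λ̄_j = x̄_{N-j+1} - N + j - 1`.  Variables `z`
and hole positions `x̄` are 0-indexed; parameter families `α, γ` are functions on `ℕ`
(indices `0,…,M` are used).  The sign choice `τ` is encoded by booleans: `τ j = true`
stands for `τ_j = +1`, `τ j = false` for `τ_j = -1`. -/
noncomputable def FIbar (M : ℕ) (t : ℂ) (α γ : ℕ → ℂ) {N : ℕ} (x : Fin N → ℕ)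
    (z : Fin N → ℂ) : ℂ :=
  (t ^ (N * (M - N) + N * (N + 1) / 2) * (∏ j, (1 + t * z j ^ 2)) *
      ∏ j, ∏ k ∈ Ioi j, (1 + t * z j * z k) * (1 + t * (z j)⁻¹ * z k)) /
  ((-1 : ℂ) ^ N * (∏ j, (1 - t ^ 2 * z j ^ 2)) *
      ∏ j, ∏ k ∈ Ioi j, (1 - t ^ 2 * z j * z k) * (1 - (z j)⁻¹ * z k)) *
  ∑ σ : Equiv.Perm (Fin N), ∑ τ : Fin N → Bool,
    ((Equiv.Perm.sign σ : ℤ) : ℂ) *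
    (-1 : ℂ) ^ (Finset.univ.filter (fun j => τ j = false)).card *
    ∏ j,
      ((∏ k ∈ Finset.range (x j),
          (-α k + (1 - α k * γ k) * (if τ (σ j) then t * z (σ j) else (t * z (σ j))⁻¹))) *
       (∏ k ∈ Finset.Icc (x j + 1) M,
          (1 + γ k * (if τ (σ j) then t * z (σ j) else (t * z (σ j))⁻¹))) *
       (∏ k ∈ Finset.Icc 1 M,
          (1 + γ k * (if τ (σ j) then (t * z (σ j))⁻¹ else t * z (σ j)))))

theorem sum_perm_sum_bool_eq_det {R ι : Type*} [CommRing R] [Fintype ι] [DecidableEq ι]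
    (G : ι → ι → Bool → R) :
    ∑ σ : Equiv.Perm ι, ∑ τ : ι → Bool,
        ((Equiv.Perm.sign σ : ℤ) : R) * (-1 : R) ^ (univ.filter fun j => τ j = false).card *
          ∏ j, G j (σ j) (τ (σ j)) =
      (Matrix.of fun j i => G j i true - G j i false).det := by
  rw [← Matrix.det_transpose, Matrix.det_apply']
  refine sum_congr rfl fun σ _ => ?_
  have hsign (τ : ι → Bool) :
      (-1 : R) ^ (univ.filter fun j => τ j = false).card = ∏ i, if τ i then 1 else -1 := by
    simp [prod_ite]
  have hreindex (τ : ι → Bool) :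
      ∏ j, G j (σ j) (τ (σ j)) = ∏ i, G (σ.symm i) i (τ i) := by
    simpa using Equiv.prod_comp σ fun i => G (σ.symm i) i (τ i)
  simp_rw [mul_assoc, ← mul_sum, hsign, hreindex, ← prod_mul_distrib]
  rw [← Fintype.prod_sum (fun i b => (if b then 1 else -1) * G (σ.symm i) i b)]
  simp only [Fintype.sum_bool, if_true, Bool.false_eq_true, if_false]
  rw [← Equiv.prod_comp σ]
  simp [sub_eq_add_neg]

theorem Matrix.det_eq_mul_det_submatrix_castSucc {R : Type*} [CommRing R] {n : ℕ}
    (A : Matrix (Fin (n + 1)) (Fin (n + 1)) R) (h : ∀ j : Fin n, A j.castSucc (Fin.last n) = 0) :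
    A.det = A (Fin.last n) (Fin.last n) * (A.submatrix Fin.castSucc Fin.castSucc).det := by
  rw [Matrix.det_succ_column A (Fin.last n), Fin.sum_univ_castSucc]
  simp [h, Fin.succAbove_last, ← two_mul, pow_mul]

theorem Fin.prod_Ioi_castSucc {M : Type*} [CommMonoid M] {n : ℕ} (f : Fin (n + 1) → M)
    (i : Fin n) : ∏ k ∈ Ioi i.castSucc, f k = (∏ k ∈ Ioi i, f k.castSucc) * f (Fin.last n) := by
  have hIoc : Ioi i.castSucc = Ioc i.castSucc (Fin.last n) := by
    ext k; simp [Fin.le_last]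
  rw [hIoc, ← prod_Ioo_mul_eq_prod_Ioc (Fin.castSucc_lt_last i), ← Fin.map_castSuccEmb_Ioi,
    prod_map]
  rfl

theorem Fin.prod_prod_Ioi_castSucc {M : Type*} [CommMonoid M] {n : ℕ}
    (f : Fin (n + 1) → Fin (n + 1) → M) :
    ∏ j, ∏ k ∈ Ioi j, f j k =
      (∏ j : Fin n, ∏ k ∈ Ioi j, f j.castSucc k.castSucc) *
        ∏ j : Fin n, f j.castSucc (Fin.last n) := by
  simp [Fin.prod_univ_castSucc, Fin.prod_Ioi_castSucc, prod_mul_distrib,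
    Ioi_eq_empty.2 fun k _ => Fin.le_last k]

noncomputable def FIbarEntry (M : ℕ) (α γ : ℕ → ℂ) (p : ℕ) (b : Bool) (u : ℂ) : ℂ :=
  (∏ k ∈ range p, (-α k + (1 - α k * γ k) * (if b then u else u⁻¹))) *
    (∏ k ∈ Icc (p + 1) M, (1 + γ k * (if b then u else u⁻¹))) *
    ∏ k ∈ Icc 1 M, (1 + γ k * (if b then u⁻¹ else u))

noncomputable def FIbarMatrix (M : ℕ) (t : ℂ) (α γ : ℕ → ℂ) {N : ℕ} (x : Fin N → ℕ)
    (z : Fin N → ℂ) : Matrix (Fin N) (Fin N) ℂ :=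
  Matrix.of fun j i =>
    FIbarEntry M α γ (x j) true (t * z i) - FIbarEntry M α γ (x j) false (t * z i)

noncomputable def FIbarPrefactor (M : ℕ) (t : ℂ) {N : ℕ} (z : Fin N → ℂ) : ℂ :=
  (t ^ (N * (M - N) + N * (N + 1) / 2) * (∏ j, (1 + t * z j ^ 2)) *
      ∏ j, ∏ k ∈ Ioi j, (1 + t * z j * z k) * (1 + t * (z j)⁻¹ * z k)) /
  ((-1 : ℂ) ^ N * (∏ j, (1 - t ^ 2 * z j ^ 2)) *
      ∏ j, ∏ k ∈ Ioi j, (1 - t ^ 2 * z j * z k) * (1 - (z j)⁻¹ * z k))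

theorem FIbar_eq_prefactor_mul_det (M : ℕ) (t : ℂ) (α γ : ℕ → ℂ) {N : ℕ} (x : Fin N → ℕ)
    (z : Fin N → ℂ) :
    FIbar M t α γ x z = FIbarPrefactor M t z * (FIbarMatrix M t α γ x z).det :=
  congrArg (FIbarPrefactor M t z * ·)
    (sum_perm_sum_bool_eq_det fun j i b => FIbarEntry M α γ (x j) b (t * z i))

section FIbarEntry

variable {M m p : ℕ} {α γ γ' : ℕ → ℂ} {b : Bool} {u : ℂ}

theorem FIbarEntry_congr (hp : p ≤ M + 1) (h : ∀ k ≤ M, γ k = γ' k) :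
    FIbarEntry M α γ p b u = FIbarEntry M α γ' p b u := by
  unfold FIbarEntry
  congr 1
  congr 1
  all_goals
    refine prod_congr rfl fun k hk => ?_
    simp only [mem_range, mem_Icc] at hk
    rw [h k (by omega)]

theorem FIbarEntry_false_eq_zero (hM : 1 ≤ M) (h : 1 + γ M * u = 0) :
    FIbarEntry M α γ p false u = 0 :=
  mul_eq_zero_of_right _ <| prod_eq_zero (mem_Icc.2 ⟨hM, le_rfl⟩) (by simpa using h)

theorem FIbarEntry_true_eq_zero (hp : p < M) (h : 1 + γ M * u = 0) :
    FIbarEntry M α γ p true u = 0 :=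
  mul_eq_zero_of_left (mul_eq_zero_of_right _ <| prod_eq_zero (mem_Icc.2 ⟨hp, le_rfl⟩)
    (by simpa using h)) _

theorem FIbarEntry_succ (hp : p ≤ m) :
    FIbarEntry (m + 1) α γ p b u =
      FIbarEntry m α γ p b u * ((1 + γ (m + 1) * u) * (1 + γ (m + 1) * u⁻¹)) := by
  unfold FIbarEntry
  rw [prod_Icc_succ_top (by omega), prod_Icc_succ_top (by omega)]
  cases b <;> simp only [Bool.false_eq_true, if_true, if_false] <;> ring

theorem FIbarEntry_succ_self_true :
    FIbarEntry (m + 1) α γ (m + 1) true u =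
      FIbarEntry m α γ (m + 1) true u * (1 + γ (m + 1) * u⁻¹) := by
  unfold FIbarEntry
  rw [Icc_eq_empty_of_lt (Nat.lt_succ_self (m + 1)),
    Icc_eq_empty_of_lt (by omega : m < m + 1 + 1), prod_Icc_succ_top (by omega : 1 ≤ m + 1)]
  simp only [if_true, prod_empty]
  ring

theorem FIbarEntry_update_eq (hp : p ≤ m + 1) (c : ℂ) :
    FIbarEntry m α (Function.update γ (m + 1) c) p b u = FIbarEntry m α γ p b u :=
  FIbarEntry_congr hp fun k hk => Function.update_of_ne (by omega) _ _

end FIbarEntry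

theorem det_FIbarMatrix_update_succ {m n : ℕ} {t : ℂ} {α γ : ℕ → ℂ} {x : Fin (n + 1) → ℕ}
    (hx : StrictMono x) (hxM : x (Fin.last n) = m + 1) {z : Fin (n + 1) → ℂ}
    (hu : t * z (Fin.last n) ≠ 0) :
    let c := -(t * z (Fin.last n))⁻¹
    (FIbarMatrix (m + 1) t α (Function.update γ (m + 1) c) x z).det =
      FIbarEntry m α γ (m + 1) true (t * z (Fin.last n)) * (1 + c * (t * z (Fin.last n))⁻¹) *
        (∏ i : Fin n, (1 + c * (t * z i.castSucc)) * (1 + c * (t * z i.castSucc)⁻¹)) *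
        (FIbarMatrix m t α γ (fun j => x j.castSucc) (fun j => z j.castSucc)).det := by
  intro c
  have hc : 1 + Function.update γ (m + 1) c (m + 1) * (t * z (Fin.last n)) = 0 := by
    simp only [Function.update_self, c, neg_mul, inv_mul_cancel₀ hu, add_neg_cancel]
  have hxle (j : Fin n) : x j.castSucc ≤ m := by
    have := hx (Fin.castSucc_lt_last j)
    omega
  rw [Matrix.det_eq_mul_det_submatrix_castSucc]
  · have hsub : (FIbarMatrix (m + 1) t α (Function.update γ (m + 1) c) x z).submatrix
        Fin.castSucc Fin.castSucc = Matrix.of fun j i =>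
          ((1 + c * (t * z i.castSucc)) * (1 + c * (t * z i.castSucc)⁻¹)) *
            FIbarMatrix m t α γ (fun j => x j.castSucc) (fun j => z j.castSucc) j i := by
      ext j i
      simp only [FIbarMatrix, Matrix.submatrix_apply, Matrix.of_apply,
        FIbarEntry_succ (hxle j), FIbarEntry_update_eq (Nat.le_succ_of_le (hxle j)),
        Function.update_self]
      ring
    rw [hsub, Matrix.det_mul_row, FIbarMatrix, Matrix.of_apply, hxM,
      FIbarEntry_false_eq_zero (by omega) hc, sub_zero, FIbarEntry_succ_self_true,
      FIbarEntry_update_eq le_rfl, Function.update_self]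
    ring
  · intro j
    rw [FIbarMatrix, Matrix.of_apply, FIbarEntry_false_eq_zero (by omega) hc,
      FIbarEntry_true_eq_zero (by have := hxle j; omega) hc, sub_zero]

theorem FIbarPrefactor_succ {m n : ℕ} (hmn : n ≤ m) (t : ℂ) (z : Fin (n + 1) → ℂ) :
    FIbarPrefactor (m + 1) t z =
      FIbarPrefactor m t (fun j => z j.castSucc) *
        ((t ^ (m + 1) * (1 + t * z (Fin.last n) ^ 2) *
            ∏ j : Fin n, (1 + t * z j.castSucc * z (Fin.last n)) *
              (1 + t * (z j.castSucc)⁻¹ * z (Fin.last n))) /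
          (-(1 - t ^ 2 * z (Fin.last n) ^ 2) *
            ∏ j : Fin n, (1 - t ^ 2 * z j.castSucc * z (Fin.last n)) *
              (1 - (z j.castSucc)⁻¹ * z (Fin.last n)))) := by
  obtain ⟨d, rfl⟩ := Nat.exists_eq_add_of_le hmn
  have hexp : (n + 1) * (n + d + 1 - (n + 1)) + (n + 1) * (n + 1 + 1) / 2 =
      (n * (n + d - n) + n * (n + 1) / 2) + (n + d + 1) := by
    rw [show (n + 1) * (n + 1 + 1) = n * (n + 1) + 2 * (n + 1) by ring,
      Nat.add_mul_div_left _ _ two_pos, Nat.add_sub_cancel_left, Nat.add_sub_add_right,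
      Nat.add_sub_cancel_left]
    ring
  unfold FIbarPrefactor
  rw [div_mul_div_comm, Fin.prod_prod_Ioi_castSucc, Fin.prod_prod_Ioi_castSucc,
    Fin.prod_univ_castSucc, Fin.prod_univ_castSucc, hexp, pow_add]
  congr 1 <;> ring

theorem FIbarEntry_self_true_mul_pow {t : ℂ} (ht : t ≠ 0) (m : ℕ) (α γ : ℕ → ℂ) (Z : ℂ) :
    t ^ m * FIbarEntry m α γ (m + 1) true (t * Z) =
      (∏ j ∈ range (m + 1), (t * (1 - α j * γ j) * Z - α j)) *
        ∏ j ∈ Icc 1 m, (t + γ j * Z⁻¹) := by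
  have hQ : ∏ j ∈ Icc 1 m, (t + γ j * Z⁻¹) = t ^ m * ∏ j ∈ Icc 1 m, (1 + γ j * (t * Z)⁻¹) := by
    rw [show t ^ m = ∏ _j ∈ Icc 1 m, t by simp, ← prod_mul_distrib]
    refine prod_congr rfl fun j _ => ?_
    field_simp
  rw [hQ, FIbarEntry, Icc_eq_empty_of_lt (by omega : m < m + 1 + 1), prod_empty, mul_one]
  simp only [if_true]
  rw [prod_congr rfl fun j _ =>
    (by ring : t * (1 - α j * γ j) * Z - α j = -α j + (1 - α j * γ j) * (t * Z))]
  ring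

theorem mixed_factor_identity {t a Z : ℂ} (ht : t ≠ 0) (ha : a ≠ 0) (hZ : Z ≠ 0) :
    (1 + t * a * Z) * (1 + t * a⁻¹ * Z) *
        ((1 + -(t * Z)⁻¹ * (t * a)) * (1 + -(t * Z)⁻¹ * (t * a)⁻¹)) =
      (1 + (t * Z * a)⁻¹) * (1 + a * (t * Z)⁻¹) * ((1 - t ^ 2 * a * Z) * (1 - a⁻¹ * Z)) := by
  field_simp
  ring

theorem diagonal_factor_identity {t Z : ℂ} (ht : t ≠ 0) (hZ : Z ≠ 0) :
    t * (1 + t * Z ^ 2) * (1 + -(t * Z)⁻¹ * (t * Z)⁻¹) =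
      -(1 - t ^ 2 * Z ^ 2) * (1 + (t * Z * Z)⁻¹) := by
  field_simp
  ring

theorem last_variable_factor {n : ℕ} (m : ℕ) {t Z : ℂ} (ht : t ≠ 0) (hZ : Z ≠ 0)
    (hZZ : t ^ 2 * Z ^ 2 ≠ 1) (a : Fin n → ℂ) (ha : ∀ j, a j ≠ 0)
    (haZ : ∀ j, t ^ 2 * a j * Z ≠ 1) (hne : ∀ j, a j ≠ Z) :
    (t ^ (m + 1) * (1 + t * Z ^ 2) * ∏ j, (1 + t * a j * Z) * (1 + t * (a j)⁻¹ * Z)) /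
        (-(1 - t ^ 2 * Z ^ 2) * ∏ j, (1 - t ^ 2 * a j * Z) * (1 - (a j)⁻¹ * Z)) *
        (1 + -(t * Z)⁻¹ * (t * Z)⁻¹) *
        ∏ j, (1 + -(t * Z)⁻¹ * (t * a j)) * (1 + -(t * Z)⁻¹ * (t * a j)⁻¹) =
      t ^ m * (1 + (t * Z * Z)⁻¹) * (∏ j, (1 + (t * Z * a j)⁻¹)) * ∏ j, (1 + a j * (t * Z)⁻¹) := by
  have hPd : ∏ j, (1 - t ^ 2 * a j * Z) * (1 - (a j)⁻¹ * Z) ≠ 0 :=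
    prod_ne_zero_iff.2 fun j _ => mul_ne_zero (sub_ne_zero.2 (haZ j).symm)
      (sub_ne_zero.2 fun h => hne j ((inv_mul_eq_one₀ (ha j)).1 h.symm))
  have hden : -(1 - t ^ 2 * Z ^ 2) * ∏ j, (1 - t ^ 2 * a j * Z) * (1 - (a j)⁻¹ * Z) ≠ 0 :=
    mul_ne_zero (neg_ne_zero.2 (sub_ne_zero.2 hZZ.symm)) hPd
  have hmixed :
      (∏ j, (1 + t * a j * Z) * (1 + t * (a j)⁻¹ * Z)) *
          ∏ j, (1 + -(t * Z)⁻¹ * (t * a j)) * (1 + -(t * Z)⁻¹ * (t * a j)⁻¹) =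
        (∏ j, (1 + (t * Z * a j)⁻¹)) * (∏ j, (1 + a j * (t * Z)⁻¹)) *
          ∏ j, (1 - t ^ 2 * a j * Z) * (1 - (a j)⁻¹ * Z) := by
    simp only [← prod_mul_distrib]
    exact prod_congr rfl fun j _ => mixed_factor_identity ht (ha j) hZ
  rw [div_mul_eq_mul_div, div_mul_eq_mul_div, div_eq_iff hden]
  linear_combination (t ^ m * t * (1 + t * Z ^ 2) * (1 + -(t * Z)⁻¹ * (t * Z)⁻¹)) * hmixed +
    (t ^ m * (∏ j, (1 + (t * Z * a j)⁻¹)) * (∏ j, (1 + a j * (t * Z)⁻¹)) *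
      ∏ j, (1 - t ^ 2 * a j * Z) * (1 - (a j)⁻¹ * Z)) * diagonal_factor_identity ht hZ

theorem FIbar_IzerginKorepin_recursion_general (m n : ℕ) (hmn : n ≤ m) (t : ℂ) (ht : t ≠ 0)
    (α γ : ℕ → ℂ)
    (x : Fin (n + 1) → ℕ) (hx : StrictMono x)
    (hxM : x (Fin.last n) = m + 1)
    (z : Fin (n + 1) → ℂ) (hz0 : ∀ j, z j ≠ 0)
    (hz1 : ∀ j, t ^ 2 * z j ^ 2 ≠ 1)
    (hzz : ∀ j k, j < k → t ^ 2 * z j * z k ≠ 1) (hzne : ∀ j k, j < k → z j ≠ z k) :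
    FIbar (m + 1) t α (Function.update γ (m + 1) (-(t * z (Fin.last n))⁻¹)) x z
      = (∏ j, (1 + (t * z (Fin.last n) * z j)⁻¹)) *
        (∏ j : Fin n, (1 + z j.castSucc * (t * z (Fin.last n))⁻¹)) *
        (∏ j ∈ Finset.range (m + 1), (t * (1 - α j * γ j) * z (Fin.last n) - α j)) *
        (∏ j ∈ Finset.Icc 1 m, (t + γ j * (z (Fin.last n))⁻¹)) *
        FIbar m t α γ (fun j : Fin n => x j.castSucc) (fun j : Fin n => z j.castSucc) := by
  have hfactor := last_variable_factor m ht (hz0 (Fin.last n)) (hz1 (Fin.last n))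
    (fun j => z j.castSucc) (fun j => hz0 _) (fun j => hzz _ _ (Fin.castSucc_lt_last j))
    (fun j => hzne _ _ (Fin.castSucc_lt_last j))
  rw [FIbar_eq_prefactor_mul_det, FIbar_eq_prefactor_mul_det,
    det_FIbarMatrix_update_succ hx hxM (mul_ne_zero ht (hz0 _)), FIbarPrefactor_succ hmn,
    Fin.prod_univ_castSucc, mul_assoc _ (∏ j ∈ range (m + 1), _),
    ← FIbarEntry_self_true_mul_pow ht]
  linear_combination (FIbarPrefactor m t (fun j => z j.castSucc) *
      FIbarEntry m α γ (m + 1) true (t * z (Fin.last n)) *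
      (FIbarMatrix m t α γ (fun j => x j.castSucc) (fun j => z j.castSucc)).det) * hfactor

/-- Izergin–Korepin recursion for the type I dual wavefunctions,
equation (66) / Proposition 4.6 Property (3): the specialization `γ_M = −(t z_N)⁻¹`
of `F̄^I_{M,N}` factorizes through `F̄^I_{M-1,N-1}`.  Here `M = m+1`, `N = n+1`, so
`F̄^I_{M-1,N-1}` is `FIbar m` on the first `n` variables/positions (interpreted as `1`
when `n = 0`). -/
theorem FIbar_IzerginKorepin_recursion (m n : ℕ) (hmn : n ≤ m) (t : ℂ) (ht : t ≠ 0)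
    (α γ : ℕ → ℂ)
    (x : Fin (n + 1) → ℕ) (hx : StrictMono x) (hx1 : ∀ j, 1 ≤ x j)
    (hxM : x (Fin.last n) = m + 1)
    (z : Fin (n + 1) → ℂ) (hz0 : ∀ j, z j ≠ 0)
    (hz1 : ∀ j, t ^ 2 * z j ^ 2 ≠ 1)
    (hzz : ∀ j k, j < k → t ^ 2 * z j * z k ≠ 1) (hzne : ∀ j k, j < k → z j ≠ z k) :
    FIbar (m + 1) t α (Function.update γ (m + 1) (-(t * z (Fin.last n))⁻¹)) x z
      = (∏ j, (1 + (t * z (Fin.last n) * z j)⁻¹)) *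
        (∏ j : Fin n, (1 + z j.castSucc * (t * z (Fin.last n))⁻¹)) *
        (∏ j ∈ Finset.range (m + 1), (t * (1 - α j * γ j) * z (Fin.last n) - α j)) *
        (∏ j ∈ Finset.Icc 1 m, (t + γ j * (z (Fin.last n))⁻¹)) *
        FIbar m t α γ (fun j : Fin n => x j.castSucc) (fun j : Fin n => z j.castSucc) :=
  FIbar_IzerginKorepin_recursion_general m n hmn t ht α γ x hx hxM z hz0 hz1 hzz hzne
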